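/- Let f : ℝⁿ → ℝ be twice continuously differentiable with L₂-Lipschitz Hessian, let x ∈ ℝⁿ, g = ∇f(x), H = ∇²f(x), T(s) = f(x) + gᵀs + (1/2)sᵀHs, and for σ > 0 let m(s) = T(s) + (σ/3)‖s‖³ with ∇m(s) = g + Hs + σ‖s‖s. Let 0 < σ_min ≤ σ ≤ σ_max, θ₁ > 0, η₁ ∈ (0,1). Suppose s ∈ ℝⁿ satisfies m(s) < m(0), ‖∇m(s)‖ ≤ (θ₁/2)‖s‖², and the acceptance condition f(x) − f(x+s) ≥ η₁(T(0) − T(s)). Then f(x) − f(x+s) ≥ (η₁/3) σ_min κ₁ ‖∇f(x+s)‖^{3/2}, where κ₁ = (2/(L₂ + θ₁ + 2σ_max))^{3/2}. -/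

import Mathlib

/-!
The cubic term makes the model decrease at least `(σ/3)‖s‖³`, so acceptance gives
`f x - f (x + s) ≥ (η₁/3) σ_min ‖s‖³`. On the other side, writing
`∇f(x+s) = (∇f(x+s) - g - Hs) + ∇m(s) - σ‖s‖s` and using the Lipschitz Hessian bounds
`‖∇f(x+s)‖ ≤ ((L₂ + θ₁ + 2σ_max)/2) ‖s‖²`, i.e. `‖s‖³ ≥ κ₁ ‖∇f(x+s)‖^{3/2}`.
-/

open RealInnerProductSpace

theorem ContDiff.differentiable_gradient {F : Type*} [NormedAddCommGroup F]
    [InnerProductSpace ℝ F] [CompleteSpace F] {f : F → ℝ} {n : WithTop ℕ∞}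
    (hf : ContDiff ℝ n f) (hn : 2 ≤ n) : Differentiable ℝ (gradient f) :=
  (InnerProductSpace.toDual ℝ F).symm.toContinuousLinearEquiv.differentiable.comp
    ((hf.fderiv_right hn).differentiable one_ne_zero)

theorem norm_sub_sub_fderiv_le_of_lipschitz_fderiv {E F : Type*} [NormedAddCommGroup E]
    [NormedSpace ℝ E] [NormedAddCommGroup F] [NormedSpace ℝ F] {G : E → F}
    (hG : Differentiable ℝ G) {L : ℝ}
    (hLip : ∀ y z : E, ‖fderiv ℝ G y - fderiv ℝ G z‖ ≤ L * ‖y - z‖) (x s : E) :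
    ‖G (x + s) - G x - fderiv ℝ G x s‖ ≤ L / 2 * ‖s‖ ^ 2 := by
  set φ : ℝ → F := fun t => G (x + t • s) - (G x + t • fderiv ℝ G x s) with hφ
  have hφ' (t : ℝ) : HasDerivAt φ (fderiv ℝ G (x + t • s) s - fderiv ℝ G x s) t := by
    have hline : HasDerivAt (fun t : ℝ => x + t • s) s t := by
      simpa using ((hasDerivAt_id t).smul_const s).const_add x
    have hlin : HasDerivAt (fun t : ℝ => G x + t • fderiv ℝ G x s) (fderiv ℝ G x s) t := by
      simpa using ((hasDerivAt_id t).smul_const (fderiv ℝ G x s)).const_add (G x)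
    exact ((hG (x + t • s)).hasFDerivAt.comp_hasDerivAt t hline).sub hlin
  have hbound : ∀ t ∈ Set.Ico (0 : ℝ) 1,
      ‖fderiv ℝ G (x + t • s) s - fderiv ℝ G x s‖ ≤ L * ‖s‖ ^ 2 * t := by
    intro t ht
    have hstep : ‖x + t • s - x‖ = t * ‖s‖ := by
      rw [add_sub_cancel_left, norm_smul, Real.norm_of_nonneg ht.1]
    calc ‖fderiv ℝ G (x + t • s) s - fderiv ℝ G x s‖
        ≤ ‖fderiv ℝ G (x + t • s) - fderiv ℝ G x‖ * ‖s‖ :=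
          (fderiv ℝ G (x + t • s) - fderiv ℝ G x).le_opNorm s
      _ ≤ L * (t * ‖s‖) * ‖s‖ := by
          gcongr
          exact hstep ▸ hLip (x + t • s) x
      _ = L * ‖s‖ ^ 2 * t := by ring
  have hB (t : ℝ) : HasDerivAt (fun t : ℝ => L * ‖s‖ ^ 2 / 2 * t ^ 2) (L * ‖s‖ ^ 2 * t) t :=
    ((hasDerivAt_pow 2 t).const_mul (L * ‖s‖ ^ 2 / 2)).congr_deriv (by ring)
  have h1 := image_norm_le_of_norm_deriv_right_le_deriv_boundary
    (fun t _ => (hφ' t).continuousAt.continuousWithinAt) (fun t _ => (hφ' t).hasDerivWithinAt)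
    (by simp [hφ]) hB hbound (Set.right_mem_Icc.2 zero_le_one)
  simp only [hφ, one_smul, one_pow, mul_one, ← sub_sub] at h1
  linarith

/-- With `G = ∇f`, the left side of `hgradm` is the gradient of the cubic model at `s`. -/
theorem norm_apply_add_le_of_norm_cubic_model_grad_le {E : Type*} [NormedAddCommGroup E]
    [NormedSpace ℝ E] {G : E → E} (hG : Differentiable ℝ G) {L θ σ : ℝ} (hσ : 0 ≤ σ)
    (hLip : ∀ y z : E, ‖fderiv ℝ G y - fderiv ℝ G z‖ ≤ L * ‖y - z‖) {x s : E}
    (hgradm : ‖G x + fderiv ℝ G x s + (σ * ‖s‖) • s‖ ≤ θ / 2 * ‖s‖ ^ 2) :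
    ‖G (x + s)‖ ≤ (L + θ + 2 * σ) / 2 * ‖s‖ ^ 2 := by
  have hreg : ‖(σ * ‖s‖) • s‖ = σ * ‖s‖ ^ 2 := by
    rw [norm_smul, Real.norm_of_nonneg (by positivity)]
    ring
  have htaylor := norm_sub_sub_fderiv_le_of_lipschitz_fderiv hG hLip x s
  calc ‖G (x + s)‖
      = ‖(G (x + s) - G x - fderiv ℝ G x s) + (G x + fderiv ℝ G x s + (σ * ‖s‖) • s)
          - (σ * ‖s‖) • s‖ := by congr 1; abel
    _ ≤ ‖G (x + s) - G x - fderiv ℝ G x s‖ + ‖G x + fderiv ℝ G x s + (σ * ‖s‖) • s‖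
          + ‖(σ * ‖s‖) • s‖ := norm_sub_le_of_le (norm_add_le _ _) le_rfl
    _ ≤ (L + θ + 2 * σ) / 2 * ‖s‖ ^ 2 := by linarith

theorem Real.rpow_three_halves_le_pow_three {u r : ℝ} (hu : 0 ≤ u) (hr : 0 ≤ r)
    (h : u ≤ r ^ 2) : u ^ ((3 : ℝ) / 2) ≤ r ^ 3 :=
  calc u ^ ((3 : ℝ) / 2) ≤ (r ^ 2) ^ ((3 : ℝ) / 2) := by gcongr
    _ = r ^ 3 := by
      rw [← Real.rpow_natCast r 2, ← Real.rpow_mul hr, ← Real.rpow_natCast r 3]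
      norm_num

theorem decrease_successful_cubic_model_step_general
    (n : ℕ) (f : EuclideanSpace ℝ (Fin n) → ℝ) (L₂ : ℝ) (hL₂ : 0 < L₂)
    (hf : ContDiff ℝ 2 f)
    (hLip : ∀ y z : EuclideanSpace ℝ (Fin n),
      ‖fderiv ℝ (gradient f) y - fderiv ℝ (gradient f) z‖ ≤ L₂ * ‖y - z‖)
    (x : EuclideanSpace ℝ (Fin n))
    (T m : EuclideanSpace ℝ (Fin n) → ℝ)
    (σ σ_min σ_max θ₁ η₁ : ℝ)
    (hσmin : 0 < σ_min) (hσlo : σ_min ≤ σ) (hσhi : σ ≤ σ_max)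
    (hθ₁ : 0 < θ₁) (hη₁ : η₁ ∈ Set.Ioo (0 : ℝ) 1)
    (hm : ∀ s : EuclideanSpace ℝ (Fin n), m s = T s + (σ / 3) * ‖s‖ ^ 3)
    (s : EuclideanSpace ℝ (Fin n))
    (hdec : m s < m 0)
    (hgradm : ‖gradient f x + fderiv ℝ (gradient f) x s + (σ * ‖s‖) • s‖ ≤ θ₁ / 2 * ‖s‖ ^ 2)
    (hacc : f x - f (x + s) ≥ η₁ * (T 0 - T s)) :
    f x - f (x + s) ≥ (η₁ / 3) * σ_min *
      (2 / (L₂ + θ₁ + 2 * σ_max)) ^ ((3 : ℝ) / 2) *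
      ‖gradient f (x + s)‖ ^ ((3 : ℝ) / 2) := by
  have hη₁0 : 0 < η₁ := hη₁.1
  have hσ : 0 < σ := hσmin.trans_le hσlo
  set A := L₂ + θ₁ + 2 * σ_max
  have hA : 0 < A := by linarith
  have hmodel : σ / 3 * ‖s‖ ^ 3 ≤ T 0 - T s := by
    rw [hm, hm, norm_zero] at hdec
    linarith
  have hfdec : η₁ / 3 * σ_min * ‖s‖ ^ 3 ≤ f x - f (x + s) :=
    calc η₁ / 3 * σ_min * ‖s‖ ^ 3 = η₁ * (σ_min / 3 * ‖s‖ ^ 3) := by ring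
      _ ≤ η₁ * (T 0 - T s) := by gcongr; exact le_trans (by gcongr) hmodel
      _ ≤ f x - f (x + s) := hacc
  have hgrad : 2 / A * ‖gradient f (x + s)‖ ≤ ‖s‖ ^ 2 := by
    have := norm_apply_add_le_of_norm_cubic_model_grad_le (hf.differentiable_gradient le_rfl)
      hσ.le hLip hgradm
    rw [div_mul_eq_mul_div, div_le_iff₀ hA]
    nlinarith
  have hκ : (2 / A) ^ ((3 : ℝ) / 2) * ‖gradient f (x + s)‖ ^ ((3 : ℝ) / 2) ≤ ‖s‖ ^ 3 := by
    rw [← Real.mul_rpow (by positivity) (norm_nonneg _)]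
    exact Real.rpow_three_halves_le_pow_three (by positivity) (norm_nonneg s) hgrad
  calc (η₁ / 3) * σ_min * (2 / A) ^ ((3 : ℝ) / 2) * ‖gradient f (x + s)‖ ^ ((3 : ℝ) / 2)
      ≤ η₁ / 3 * σ_min * ‖s‖ ^ 3 := by rw [mul_assoc]; gcongr
    _ ≤ f x - f (x + s) := hfdec

/-- Function decrease on a successful cubic-model iteration:
if `m(s) < m(0)`, `‖∇m(s)‖ ≤ (θ₁/2)‖s‖²`, and `f(x) - f(x+s) ≥ η₁(T(0) - T(s))`, then
`f(x) - f(x+s) ≥ (η₁/3)σ_min κ₁ ‖∇f(x+s)‖^{3/2}` with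
`κ₁ = (2/(L₂ + θ₁ + 2σ_max))^{3/2}`. -/
theorem decrease_successful_cubic_model_step
    (n : ℕ) (f : EuclideanSpace ℝ (Fin n) → ℝ) (L₂ : ℝ) (hL₂ : 0 < L₂)
    (hf : ContDiff ℝ 2 f)
    (hLip : ∀ y z : EuclideanSpace ℝ (Fin n),
      ‖fderiv ℝ (gradient f) y - fderiv ℝ (gradient f) z‖ ≤ L₂ * ‖y - z‖)
    (x : EuclideanSpace ℝ (Fin n))
    (T m : EuclideanSpace ℝ (Fin n) → ℝ)
    (hT : ∀ s : EuclideanSpace ℝ (Fin n),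
      T s = f x + ⟪gradient f x, s⟫ + (1 / 2) * ⟪s, fderiv ℝ (gradient f) x s⟫)
    (σ σ_min σ_max θ₁ η₁ : ℝ)
    (hσmin : 0 < σ_min) (hσlo : σ_min ≤ σ) (hσhi : σ ≤ σ_max)
    (hθ₁ : 0 < θ₁) (hη₁ : η₁ ∈ Set.Ioo (0 : ℝ) 1)
    (hm : ∀ s : EuclideanSpace ℝ (Fin n), m s = T s + (σ / 3) * ‖s‖ ^ 3)
    (s : EuclideanSpace ℝ (Fin n))
    (hdec : m s < m 0)
    (hgradm : ‖gradient f x + fderiv ℝ (gradient f) x s + (σ * ‖s‖) • s‖ ≤ θ₁ / 2 * ‖s‖ ^ 2)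
    (hacc : f x - f (x + s) ≥ η₁ * (T 0 - T s)) :
    f x - f (x + s) ≥ (η₁ / 3) * σ_min *
      (2 / (L₂ + θ₁ + 2 * σ_max)) ^ ((3 : ℝ) / 2) *
      ‖gradient f (x + s)‖ ^ ((3 : ℝ) / 2) :=
  decrease_successful_cubic_model_step_general n f L₂ hL₂ hf hLip x T m σ σ_min σ_max θ₁ η₁ hσmin
    hσlo hσhi hθ₁ hη₁ hm s hdec hgradm hacc
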